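/- Let 𝕜 be an algebraically closed field of characteristic 0, k ≥ 2, and let A be the k×k matrix consisting of the Jordan block J_{λ₁,2} and diagonal part diag(λ₂,…,λ_{k-1}), where λ₁, …, λ_{k-1} are multiplicatively independent nonzero elements. Then the orbit of α = (1,…,1) under x ↦ A·x is Zariski dense in affine k-space. -/

import Mathlib

/-!
Write the orbit as `v_n = (λ₁ⁿ (1 + n/λ₁), λ₁ⁿ, λ₂ⁿ, …, λ_{k-1}ⁿ)`. A monomial `x^m` takes the
value `(1 + n/λ₁)^{m₀} · w(m)ⁿ` at `v_n`, with weight `w(m) = ∏ᵢ dᵢ^{mᵢ}` (`d` the diagonal of `A`),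
so `F(v_n)` is an exponential polynomial `∑_z P_z(n) zⁿ` whose frequencies are the weights of
the monomials of `F`. If it vanishes for all `n`, every `P_z` is zero, since distinct frequencies
cannot cancel. By multiplicative independence, two monomials of equal weight differ only in
`m₀` and `m₁`, with `m₀ + m₁` fixed, so `P_z` is a combination of distinct powers of `1 + X/λ₁` and
all coefficients of `F` vanish.
-/

open Polynomial Finset
open scoped Matrix

namespace Polynomial

variable {𝕜 : Type*} [Field 𝕜]

/-- On the sequence `n ↦ p(n) μⁿ` this acts as the operator `E - ν`, `E` the shift. -/
noncomputable def twistedDiff (μ ν : 𝕜) (p : 𝕜[X]) : 𝕜[X] := μ • taylor 1 p - ν • p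

@[simp]
theorem eval_twistedDiff (μ ν x : 𝕜) (p : 𝕜[X]) :
    (twistedDiff μ ν p).eval x = μ * p.eval (x + 1) - ν * p.eval x := by
  simp [twistedDiff, taylor_eval]

theorem twistedDiff_ne_zero {μ ν : 𝕜} (hμν : μ ≠ ν) {p : 𝕜[X]} (hp : p ≠ 0) :
    twistedDiff μ ν p ≠ 0 := by
  intro h
  have := congrArg (coeff · p.natDegree) h
  simp only [twistedDiff, coeff_sub, coeff_smul, coeff_taylor_natDegree, coeff_natDegree,
    smul_eq_mul, ← sub_mul, coeff_zero] at this
  exact mul_ne_zero (sub_ne_zero.mpr hμν) (leadingCoeff_ne_zero.mpr hp) this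

theorem iterate_twistedDiff_ne_zero {μ ν : 𝕜} (hμν : μ ≠ ν) {p : 𝕜[X]} (hp : p ≠ 0) (k : ℕ) :
    (twistedDiff μ ν)^[k] p ≠ 0 := by
  induction k with
  | zero => exact hp
  | succ k ih => rw [Function.iterate_succ_apply']; exact twistedDiff_ne_zero hμν ih

theorem eval_iterate_twistedDiff_self (μ : 𝕜) (p : 𝕜[X]) (k : ℕ) (x : 𝕜) :
    ((twistedDiff μ μ)^[k] p).eval x = μ ^ k * (fwdDiff 1)^[k] (fun y => p.eval y) x := by
  induction k generalizing x with
  | zero => simp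
  | succ k ih =>
    simp only [Function.iterate_succ_apply', eval_twistedDiff, ih, fwdDiff]
    ring

theorem iterate_twistedDiff_self_natDegree_add_one [CharZero 𝕜] (μ : 𝕜) (p : 𝕜[X]) :
    (twistedDiff μ μ)^[p.natDegree + 1] p = 0 :=
  Polynomial.funext fun x => by
    rw [eval_iterate_twistedDiff_self, fwdDiff_iter_degree_add_one_eq_zero, Pi.zero_apply,
      mul_zero, eval_zero]

theorem sum_eval_twistedDiff_mul_pow (s : Finset 𝕜) (p : 𝕜 → 𝕜[X]) (ν : 𝕜) (n : ℕ) :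
    ∑ μ ∈ s, (twistedDiff μ ν (p μ)).eval (n : 𝕜) * μ ^ n =
      ∑ μ ∈ s, (p μ).eval ((n + 1 : ℕ) : 𝕜) * μ ^ (n + 1) -
        ν * ∑ μ ∈ s, (p μ).eval (n : 𝕜) * μ ^ n := by
  rw [mul_sum, ← sum_sub_distrib]
  refine sum_congr rfl fun μ _ => ?_
  simp only [eval_twistedDiff]
  push_cast
  ring

theorem sum_eval_iterate_twistedDiff_mul_pow_eq_zero {s : Finset 𝕜} {p : 𝕜 → 𝕜[X]}
    (h : ∀ n : ℕ, ∑ μ ∈ s, (p μ).eval (n : 𝕜) * μ ^ n = 0) (ν : 𝕜) (k n : ℕ) :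
    ∑ μ ∈ s, ((twistedDiff μ ν)^[k] (p μ)).eval (n : 𝕜) * μ ^ n = 0 := by
  induction k generalizing n with
  | zero => exact h n
  | succ k ih =>
    simp only [Function.iterate_succ_apply']
    rw [sum_eval_twistedDiff_mul_pow, ih, ih, mul_zero, sub_zero]

theorem eq_zero_of_forall_eval_natCast_mul_pow_eq_zero [CharZero 𝕜] {p : 𝕜[X]} {μ : 𝕜}
    (hμ : μ ≠ 0) (h : ∀ n : ℕ, p.eval (n : 𝕜) * μ ^ n = 0) : p = 0 :=
  p.eq_zero_of_infinite_isRoot <| Set.infinite_of_injective_forall_mem Nat.cast_injective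
    fun n => (mul_eq_zero.mp (h n)).resolve_right (pow_ne_zero n hμ)

theorem eq_zero_of_forall_sum_eval_mul_pow_eq_zero [CharZero 𝕜] {s : Finset 𝕜} (hs : 0 ∉ s)
    {p : 𝕜 → 𝕜[X]} (h : ∀ n : ℕ, ∑ μ ∈ s, (p μ).eval (n : 𝕜) * μ ^ n = 0) :
    ∀ μ ∈ s, p μ = 0 := by
  classical
  induction s using Finset.induction_on generalizing p with
  | empty => simp
  | insert a s ha ih =>
    -- `deg p_a + 1` applications of `E - a` kill the `a`-term and are injective on the others.
    have hk := sum_eval_iterate_twistedDiff_mul_pow_eq_zero h a ((p a).natDegree + 1)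
    simp only [sum_insert ha, iterate_twistedDiff_self_natDegree_add_one, eval_zero, zero_mul,
      zero_add] at hk
    have hps : ∀ μ ∈ s, p μ = 0 := fun μ hμ => by
      by_contra hpμ
      exact iterate_twistedDiff_ne_zero (ne_of_mem_of_not_mem hμ ha) hpμ _
        (ih (fun h0 => hs (mem_insert_of_mem h0)) hk μ hμ)
    have hpa : p a = 0 := by
      refine eq_zero_of_forall_eval_natCast_mul_pow_eq_zero
        (fun h0 => hs (h0 ▸ mem_insert_self a s)) fun n => ?_
      have hn := h n
      rwa [sum_insert ha, sum_eq_zero fun μ hμ => by rw [hps μ hμ, eval_zero, zero_mul],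
        add_zero] at hn
    intro μ hμ
    rcases mem_insert.mp hμ with rfl | hμ
    exacts [hpa, hps μ hμ]

theorem eq_zero_of_sum_C_mul_pow_eq_zero {ι : Type*} {s : Finset ι} {e : ι → ℕ}
    (he : Set.InjOn e s) {q : 𝕜[X]} (hq : 0 < q.natDegree) {a : ι → 𝕜}
    (h : ∑ i ∈ s, C (a i) * q ^ e i = 0) : ∀ i ∈ s, a i = 0 := by
  have hcomp : (∑ i ∈ s, C (a i) * X ^ e i).comp q = 0 := by
    simpa [sum_comp] using h
  have hsum : ∑ i ∈ s, C (a i) * X ^ e i = 0 := by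
    refine (comp_eq_zero_iff.mp hcomp).resolve_right fun ⟨_, hqC⟩ => ?_
    rw [hqC, natDegree_C] at hq
    exact hq.false
  intro i hi
  have := congrArg (coeff · (e i)) hsum
  simp only [finsetSum_coeff, coeff_C_mul_X_pow, coeff_zero] at this
  rwa [sum_eq_single_of_mem i hi (fun j hj hji => if_neg fun h => hji (he hj hi h.symm)),
    if_pos rfl] at this

end Polynomial

section JordanOrbit

variable {𝕜 : Type*} [Field 𝕜] {σ : Type*} [Fintype σ] [DecidableEq σ]

def jordanOrbit (d : σ → 𝕜) (i₀ : σ) (n : ℕ) (i : σ) : 𝕜 :=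
  d i ^ n * if i = i₀ then 1 + (n : 𝕜) / d i₀ else 1

theorem pow_mulVec_one_eq_jordanOrbit {d : σ → 𝕜} {i₀ i₁ : σ} (hi : i₀ ≠ i₁)
    (hd : d i₁ = d i₀) (hd₀ : d i₀ ≠ 0) (n : ℕ) :
    (Matrix.diagonal d + Matrix.single i₀ i₁ 1) ^ n *ᵥ (fun _ => 1) = jordanOrbit d i₀ n := by
  induction n with
  | zero => ext i; simp [jordanOrbit]
  | succ n ih =>
    rw [pow_succ', ← Matrix.mulVec_mulVec, ih, Matrix.add_mulVec, Matrix.single_mulVec]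
    ext i
    rcases eq_or_ne i i₀ with rfl | hi₀
    · simp only [jordanOrbit, hd, hi.symm, ↓reduceIte, mul_one, Pi.add_apply,
        Matrix.mulVec_diagonal, Function.update_self, Nat.cast_add, Nat.cast_one]
      field_simp
      ring
    · simp [Matrix.mulVec_diagonal, jordanOrbit, hi₀, pow_succ']

theorem prod_jordanOrbit_pow (d : σ → 𝕜) (i₀ : σ) (n : ℕ) (m : σ →₀ ℕ) :
    ∏ i, jordanOrbit d i₀ n i ^ m i = (1 + (n : 𝕜) / d i₀) ^ m i₀ * (∏ i, d i ^ m i) ^ n := by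
  simp only [jordanOrbit, mul_pow, prod_mul_distrib, ite_pow, one_pow, prod_ite_eq', mem_univ,
    if_true, ← prod_pow, ← pow_mul, mul_comm n]
  ring

theorem eq_zero_of_forall_eval_jordanOrbit_eq_zero [CharZero 𝕜] {d : σ → 𝕜}
    (hd : ∀ i, d i ≠ 0) {i₀ : σ}
    (hinj : Function.Injective fun m : σ →₀ ℕ => (∏ i, d i ^ m i, m i₀))
    {F : MvPolynomial σ 𝕜} (hF : ∀ n : ℕ, MvPolynomial.eval (jordanOrbit d i₀ n) F = 0) :
    F = 0 := by
  classical
  set w : (σ →₀ ℕ) → 𝕜 := fun m => ∏ i, d i ^ m i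
  set P : (σ →₀ ℕ) → 𝕜[X] := fun m => C (F.coeff m) * (1 + C (d i₀)⁻¹ * X) ^ m i₀
  have hexp : ∀ n : ℕ, ∑ z ∈ F.support.image w,
      (∑ m ∈ F.support with w m = z, P m).eval (n : 𝕜) * z ^ n = 0 := fun n => by
    rw [← hF n, MvPolynomial.eval_eq',
      ← sum_fiberwise_of_maps_to fun m hm => mem_image_of_mem w hm]
    refine sum_congr rfl fun z _ => ?_
    rw [eval_finsetSum, sum_mul]
    refine sum_congr rfl fun m hm => ?_
    rw [← (mem_filter.mp hm).2, prod_jordanOrbit_pow]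
    simp only [P, eval_mul, eval_C, eval_pow, eval_add, eval_one, eval_X, div_eq_inv_mul]
    ring
  have hw : 0 ∉ F.support.image w := by
    simp only [w, mem_image, not_exists, not_and]
    exact fun m _ => prod_ne_zero_iff.mpr fun i _ => pow_ne_zero _ (hd i)
  have hfiber := eq_zero_of_forall_sum_eval_mul_pow_eq_zero hw hexp
  have hq : 0 < (1 + C (d i₀)⁻¹ * X).natDegree := by
    rw [add_comm, ← C_1, natDegree_add_C, natDegree_C_mul_X _ (inv_ne_zero (hd i₀))]
    exact one_pos
  ext m
  by_contra hm
  rw [MvPolynomial.coeff_zero] at hm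
  have hm_supp := MvPolynomial.mem_support_iff.mpr hm
  have hinjOn : Set.InjOn (fun m' : σ →₀ ℕ => m' i₀) ↑(F.support.filter (w · = w m)) :=
    fun m₁ hm₁ m₂ hm₂ h =>
      hinj (Prod.ext ((mem_filter.mp hm₁).2.trans (mem_filter.mp hm₂).2.symm) h)
  exact hm (eq_zero_of_sum_C_mul_pow_eq_zero hinjOn hq
    (hfiber _ (mem_image_of_mem w hm_supp)) m (mem_filter.mpr ⟨hm_supp, rfl⟩))

end JordanOrbit

theorem injective_prod_pow_of_multiplicativeIndependent {𝕜 ι : Type*} [Field 𝕜] [Fintype ι]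
    {lam : ι → 𝕜} (h0 : ∀ i, lam i ≠ 0) (hindep : ∀ c : ι → ℤ, ∏ i, lam i ^ c i = 1 → c = 0) :
    Function.Injective fun a : ι → ℕ => ∏ i, lam i ^ a i := by
  intro a b hab
  have hc : ∏ i, lam i ^ ((a i : ℤ) - b i) = 1 := by
    simp only [zpow_sub₀ (h0 _), zpow_natCast, prod_div_distrib]
    exact div_eq_one_iff_eq (prod_ne_zero_iff.mpr fun i _ => pow_ne_zero _ (h0 i)) |>.mpr hab
  funext i
  simpa [sub_eq_zero] using congrFun (hindep _ hc) i

theorem injective_prod_cons_pow {𝕜 : Type*} [Field 𝕜] {t : ℕ} {a : 𝕜} (ha : a ≠ 0)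
    {lam : Fin (t + 1) → 𝕜}
    (hlam : Function.Injective fun e : Fin (t + 1) → ℕ => ∏ i, lam i ^ e i) :
    Function.Injective fun m : Fin (t + 2) →₀ ℕ =>
      (∏ i, (Fin.cons a lam : Fin (t + 2) → 𝕜) i ^ m i, m 0) := by
  intro m m' h
  obtain ⟨hprod, h0⟩ := Prod.mk.inj h
  simp only [Fin.prod_univ_succ (n := t + 1), Fin.cons_zero, Fin.cons_succ, h0] at hprod
  have hsucc := congrFun (hlam (mul_left_cancel₀ (pow_ne_zero _ ha) hprod))
  ext i
  cases i using Fin.cases with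
  | zero => exact h0
  | succ j => exact hsucc j

theorem eq_diagonal_cons_add_single {𝕜 : Type*} [Field 𝕜] {t : ℕ} {lam : Fin (t + 1) → 𝕜}
    {A : Matrix (Fin (t + 2)) (Fin (t + 2)) 𝕜}
    (hA : ∀ i j : Fin (t + 2), A i j =
      if i = j then
        (if (i : ℕ) ≤ 1 then lam 0 else lam ⟨(i : ℕ) - 1, by omega⟩)
      else if (i : ℕ) = 0 ∧ (j : ℕ) = 1 then 1 else 0) :
    A = Matrix.diagonal (Fin.cons (lam 0) lam) + Matrix.single 0 1 1 := by
  ext i j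
  rw [hA, Matrix.add_apply, Matrix.diagonal_apply, Matrix.single_apply]
  rcases eq_or_ne i j with rfl | hij
  · have hii : ¬(0 = i ∧ 1 = i) := fun h => zero_ne_one (h.1.trans h.2.symm)
    rw [if_pos rfl, if_pos rfl, if_neg hii, add_zero]
    cases i using Fin.cases with
    | zero => rfl
    | succ i =>
      cases i using Fin.cases with
      | zero => rfl
      | succ i => rfl
  · have h01 : ((i : ℕ) = 0 ∧ (j : ℕ) = 1) ↔ (0 = i ∧ 1 = j) := by
      simp only [Fin.ext_iff, Fin.val_zero, Fin.val_one]
      omega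
    rw [if_neg hij, if_neg hij, zero_add, if_congr h01 rfl rfl]

/-- here `k = t+2 ≥ 2` and `lam : Fin (t+1) → 𝕜` lists the
multiplicatively independent nonzero eigenvalues `λ₁,…,λ_{k-1}`.
`A = J_{λ₁,2} ⊕ diag(λ₂,…,λ_{k-1})`. Then the orbit of `(1,…,1)` under `x ↦ A·x`
is Zariski dense in `𝔸^k`: no nonzero polynomial vanishes on the whole orbit. -/
theorem stmt10 {𝕜 : Type*} [Field 𝕜] [CharZero 𝕜] {t : ℕ}
    (lam : Fin (t + 1) → 𝕜) (h0 : ∀ i, lam i ≠ 0)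
    (hindep : ∀ c : Fin (t + 1) → ℤ, ∏ i, lam i ^ c i = 1 → c = 0)
    (A : Matrix (Fin (t + 2)) (Fin (t + 2)) 𝕜)
    (hA : ∀ i j : Fin (t + 2), A i j =
      if i = j then
        (if (i : ℕ) ≤ 1 then lam 0 else lam ⟨(i : ℕ) - 1, by have := i.isLt; omega⟩)
      else if (i : ℕ) = 0 ∧ (j : ℕ) = 1 then 1 else 0)
    (F : MvPolynomial (Fin (t + 2)) 𝕜) (hF : F ≠ 0) :
    ∃ n : ℕ, MvPolynomial.eval ((A ^ n).mulVec (fun _ => (1 : 𝕜))) F ≠ 0 := by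
  set d : Fin (t + 2) → 𝕜 := Fin.cons (lam 0) lam
  have hd : ∀ i, d i ≠ 0 := Fin.cases (h0 0) h0
  by_contra! hvanish
  refine hF (eq_zero_of_forall_eval_jordanOrbit_eq_zero hd
    (injective_prod_cons_pow (h0 0) (injective_prod_pow_of_multiplicativeIndependent h0 hindep))
    fun n => ?_)
  rw [← pow_mulVec_one_eq_jordanOrbit (d := d) (i₀ := 0) (i₁ := 1) zero_ne_one rfl (h0 0),
    ← eq_diagonal_cons_add_single hA]
  exact hvanish n
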